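/- Let p(c, x₁) be a real polynomial of degree n ≥ 1 in c, with leading coefficient pₙ(x₁) and resultant Rₙ = Res(p, ∂p/∂c; c) ≢ 0. Let α be the largest positive real root of pₙ and suppose that: (i) there exists α_k > α, a real root of Rₙ, such that no point (c, x₁) of the curve p = 0 with c ∈ J has x₁ ≥ α_k (i.e., the bound of the first part holds with bound α_k); (ii) for every real root γ of Rₙ with γ ∈ [α, α_k], the equation p(c, γ) = 0 has no solution c ∈ J; (iii) if J = [0, ∞), the univariate polynomial p(0, x₁) has no real root greater than α. Then every point (c, x₁) on the curve p = 0 with c ∈ J satisfies x₁ ≤ α. -/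

import Mathlib

/-!
Suppose a point `(c₀, x₀)` of the curve over `J` had `x₀ > α`. Over `[x₀, α_k]` the leading
coefficient `pₙ` does not vanish, so by Cauchy's bound the roots in `c` stay bounded and the set of
`x₁ ∈ [x₀, α_k]` over which the curve meets `J` is compact; let `β` be its maximum, attained at
`(c, β)`. Since `α < β < α_k`, hypothesis (ii) gives `Rₙ(β) ≠ 0`, so `c` is a simple root of
`p(·, β)`, and `c` is interior to `J` (by (iii) when `J = [0, ∞)`). A simple root is a sign change,
and a sign change persists for `x₁` slightly above `β`; the intermediate value theorem then gives
a point of the curve over `J` beyond `β`, contradicting maximality.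
-/

open Polynomial Filter

/-- The Sylvester matrix of `f` and `g`, viewed as polynomials of formal degrees
`m` and `k` respectively: `k` shifted rows of coefficients of `f` followed by
`m` shifted rows of coefficients of `g`. -/
noncomputable def sylvester {R : Type*} [CommRing R] (m k : ℕ) (f g : Polynomial R) :
    Matrix (Fin (k + m)) (Fin (k + m)) R :=
  Matrix.of fun i j =>
    if (i : ℕ) < k then (if (i : ℕ) ≤ (j : ℕ) then f.coeff ((j : ℕ) - (i : ℕ)) else 0)
    else (if (i : ℕ) - k ≤ (j : ℕ) then g.coeff ((j : ℕ) - ((i : ℕ) - k)) else 0)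

/-- The resultant of `f` and `g` with formal degrees `m` and `k`. -/
noncomputable def resultant {R : Type*} [CommRing R] (m k : ℕ) (f g : Polynomial R) : R :=
  (sylvester m k f g).det

/-- Evaluation at `(c, x)` of a bivariate polynomial `p ∈ ℝ[x][c]`
(outer variable `c`, coefficients in `ℝ[x]`). -/
noncomputable def evalCX (c x : ℝ) (p : Polynomial (Polynomial ℝ)) : ℝ :=
  (p.map (Polynomial.evalRingHom x)).eval c

open Topology Set

theorem sylvester_eq_transpose {R : Type*} [CommRing R] {m k : ℕ} {f g : R[X]}
    (hf : f.natDegree ≤ m) (hg : g.natDegree ≤ k) :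
    sylvester m k f g = (Polynomial.sylvester g f k m).transpose := by
  ext ⟨i, hi⟩ j
  simp only [_root_.sylvester, Polynomial.sylvester, Matrix.transpose_apply, Matrix.of_apply]
  by_cases hik : i < k
  · rw [show (⟨i, hi⟩ : Fin (k + m)) = Fin.castAdd m ⟨i, hik⟩ from rfl, Fin.addCases_left]
    simp only [hik, if_true, Set.mem_Icc]
    split_ifs <;> first | rfl | (apply coeff_eq_zero_of_natDegree_lt; omega) | omega
  · rw [show (⟨i, hi⟩ : Fin (k + m)) = Fin.natAdd k ⟨i - k, by omega⟩ by ext; simp; omega,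
      Fin.addCases_right]
    simp only [hik, if_false, Set.mem_Icc]
    split_ifs <;> first | rfl | (apply coeff_eq_zero_of_natDegree_lt; omega) | omega

theorem resultant_eq_polynomial_resultant {R : Type*} [CommRing R] {m k : ℕ} {f g : R[X]}
    (hf : f.natDegree ≤ m) (hg : g.natDegree ≤ k) :
    resultant m k f g = Polynomial.resultant g f k m := by
  rw [_root_.resultant, sylvester_eq_transpose hf hg, Matrix.det_transpose, Polynomial.resultant]

theorem Polynomial.resultant_eq_zero_of_isRoot {R : Type*} [CommRing R] {f g : R[X]} {m n : ℕ}
    (hf : f.natDegree ≤ m) (hg : g.natDegree ≤ n) (hmn : m ≠ 0 ∨ n ≠ 0) {c : R}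
    (hfc : f.IsRoot c) (hgc : g.IsRoot c) : f.resultant g m n = 0 := by
  obtain ⟨a, b, -, -, h⟩ := exists_mul_add_mul_eq_C_resultant f g hf hg hmn
  simpa [hfc.eq_zero, hgc.eq_zero] using (congrArg (eval c) h).symm

theorem map_resultant_derivative_eq_zero {R S : Type*} [CommRing R] [CommRing S] (φ : R →+* S)
    {p : R[X]} {n : ℕ} (hn : 1 ≤ n) (hp : p.natDegree ≤ n) {c : S}
    (hc : (p.map φ).IsRoot c) (hc' : ((derivative p).map φ).IsRoot c) :
    φ (resultant n (n - 1) p (derivative p)) = 0 := by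
  have hp' : (derivative p).natDegree ≤ n - 1 := (natDegree_derivative_le p).trans (by omega)
  rw [resultant_eq_polynomial_resultant hp hp', ← resultant_map_map]
  exact resultant_eq_zero_of_isRoot (natDegree_map_le.trans hp') (natDegree_map_le.trans hp)
    (Or.inr (by omega)) hc' hc

theorem exists_Icc_subset_mul_neg_of_hasDerivAt {f : ℝ → ℝ} {f' c : ℝ} {U : Set ℝ}
    (hf : HasDerivAt f f' c) (hfc : f c = 0) (hf' : f' ≠ 0) (hU : U ∈ 𝓝 c) :
    ∃ a b, a ≤ b ∧ Icc a b ⊆ U ∧ f a * f b < 0 := by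
  -- `f t / (t - c)` has the sign of `f'` near `c`, so `f` changes sign across `c`
  have hslope : ∀ᶠ t in 𝓝[≠] c, 0 < slope f c t * f' :=
    (hasDerivAt_iff_tendsto_slope.mp hf).eventually <|
      (continuous_mul_const f').continuousAt.preimage_mem_nhds
        (Ioi_mem_nhds (mul_self_pos.mpr hf'))
  obtain ⟨ε, hε, hball⟩ := Metric.eventually_nhds_iff_ball.mp
    ((eventually_nhdsWithin_iff.mp hslope).and hU)
  have hmem : ∀ t ∈ Icc (c - ε / 2) (c + ε / 2), t ∈ Metric.ball c ε := fun t ht => by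
    rw [Metric.mem_ball, Real.dist_eq, abs_lt]
    constructor <;> linarith [ht.1, ht.2]
  refine ⟨c - ε / 2, c + ε / 2, by linarith, fun t ht => (hball t (hmem t ht)).2, ?_⟩
  have hl := (hball _ (hmem _ ⟨le_rfl, by linarith⟩)).1 (by simp; linarith)
  have hr := (hball _ (hmem _ ⟨by linarith, le_rfl⟩)).1 (by simp; linarith)
  rw [slope_def_field, hfc, sub_zero, div_mul_eq_mul_div] at hl hr
  rw [show c - ε / 2 - c = -(ε / 2) by ring, lt_div_iff_of_neg (by linarith)] at hl
  rw [show c + ε / 2 - c = ε / 2 by ring, lt_div_iff₀ (by linarith)] at hr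
  nlinarith [mul_self_pos.mpr hf']

theorem eventually_exists_mem_Icc_eq_zero {F : ℝ → ℝ → ℝ} (hF : Continuous (Function.uncurry F))
    {a b y : ℝ} (hab : a ≤ b) (hy : F a y * F b y < 0) :
    ∀ᶠ y' in 𝓝 y, ∃ c ∈ Icc a b, F c y' = 0 := by
  have hcont : ∀ c, Continuous (F c) := fun c => hF.comp (continuous_const.prodMk continuous_id)
  filter_upwards [((hcont a).mul (hcont b)).continuousAt.eventually_lt continuousAt_const hy]
    with y' hy'
  have hIcc : ContinuousOn (fun c => F c y') (Icc a b) :=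
    (hF.comp (continuous_id.prodMk continuous_const)).continuousOn
  rcases mul_neg_iff.mp hy' with ⟨ha, hb⟩ | ⟨ha, hb⟩
  · exact intermediate_value_Icc' hab hIcc ⟨hb.le, ha.le⟩
  · exact intermediate_value_Icc hab hIcc ⟨ha.le, hb.le⟩

theorem continuous_evalCX (p : ℝ[X][X]) : Continuous fun cx : ℝ × ℝ => evalCX cx.1 cx.2 p := by
  simp only [evalCX, eval_map, eval₂_eq_sum_range, coe_evalRingHom]
  fun_prop

theorem hasDerivAt_evalCX (p : ℝ[X][X]) (c x : ℝ) :
    HasDerivAt (fun c => evalCX c x p) (evalCX c x (derivative p)) c := by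
  simpa only [evalCX, derivative_map] using (p.map (evalRingHom x)).hasDerivAt c

theorem eventually_exists_evalCX_eq_zero_of_derivative_ne_zero {p : ℝ[X][X]} {c x : ℝ}
    (hc : evalCX c x p = 0) (hc' : evalCX c x (derivative p) ≠ 0) {U : Set ℝ} (hU : U ∈ 𝓝 c) :
    ∀ᶠ x' in 𝓝 x, ∃ c' ∈ U, evalCX c' x' p = 0 := by
  obtain ⟨a, b, hab, hU', hsign⟩ :=
    exists_Icc_subset_mul_neg_of_hasDerivAt (hasDerivAt_evalCX p c x) hc hc' hU
  filter_upwards [eventually_exists_mem_Icc_eq_zero (F := fun c x => evalCX c x p)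
    (continuous_evalCX p) hab hsign] with x' ⟨c', hc'I, hc'⟩
  exact ⟨c', hU' hc'I, hc'⟩

theorem exists_forall_abs_le_of_evalCX_eq_zero {p : ℝ[X][X]} {I : Set ℝ} (hI : IsCompact I)
    (hlead : ∀ x ∈ I, p.leadingCoeff.eval x ≠ 0) :
    ∃ B : ℝ, ∀ x ∈ I, ∀ c, evalCX c x p = 0 → |c| ≤ B := by
  have hlead' : ∀ x ∈ I, evalRingHom x p.leadingCoeff ≠ 0 := hlead
  -- the Cauchy bound of the fiber over `x`, in a form whose continuity in `x` is visible
  set b : ℝ → NNReal := fun x =>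
    (Finset.range p.natDegree).sup (fun i => ‖(p.coeff i).eval x‖₊) / ‖p.leadingCoeff.eval x‖₊ + 1
  have hb : ∀ x ∈ I, cauchyBound (p.map (evalRingHom x)) = b x := fun x hx => by
    simp [cauchyBound, b, natDegree_map_of_leadingCoeff_ne_zero _ (hlead' x hx),
      leadingCoeff_map_of_leadingCoeff_ne_zero _ (hlead' x hx)]
  have hbcont : ContinuousOn b I := by
    refine ((ContinuousOn.finset_sup_apply fun i _ => ?_).div₀ ?_ fun x hx => ?_).add
      continuousOn_const
    · exact (p.coeff i).continuous.nnnorm.continuousOn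
    · exact p.leadingCoeff.continuous.nnnorm.continuousOn
    · simpa using hlead x hx
  obtain ⟨B, hB⟩ := hI.bddAbove_image hbcont
  refine ⟨B, fun x hx c hc => ?_⟩
  have hne : p.map (evalRingHom x) ≠ 0 := fun h => hlead' x hx (by
    simpa [h] using (leadingCoeff_map_of_leadingCoeff_ne_zero _ (hlead' x hx)).symm)
  have := (IsRoot.norm_lt_cauchyBound hne hc).le.trans ((hb x hx).le.trans (hB ⟨x, hx, rfl⟩))
  exact_mod_cast this

theorem isCompact_setOf_exists_evalCX_eq_zero {p : ℝ[X][X]} {I J : Set ℝ} (hI : IsCompact I)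
    (hJ : IsClosed J) (hlead : ∀ x ∈ I, p.leadingCoeff.eval x ≠ 0) :
    IsCompact {x ∈ I | ∃ c ∈ J, evalCX c x p = 0} := by
  obtain ⟨B, hB⟩ := exists_forall_abs_le_of_evalCX_eq_zero hI hlead
  have hK : IsCompact ((Icc (-B) B ∩ J) ×ˢ I ∩ {cx : ℝ × ℝ | evalCX cx.1 cx.2 p = 0}) :=
    ((isCompact_Icc.inter_right hJ).prod hI).inter_right
      (isClosed_eq (continuous_evalCX p) continuous_const)
  convert hK.image continuous_snd using 1
  ext x
  constructor
  · rintro ⟨hxI, c, hcJ, hc⟩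
    exact ⟨(c, x), ⟨⟨⟨abs_le.mp (hB x hxI c hc), hcJ⟩, hxI⟩, hc⟩, rfl⟩
  · rintro ⟨⟨c, x⟩, ⟨⟨⟨-, hcJ⟩, hxI⟩, hc⟩, rfl⟩
    exact ⟨hxI, c, hcJ, hc⟩

theorem statement5_general (p : Polynomial (Polynomial ℝ)) (n : ℕ) (hn : 1 ≤ n)
    (hdeg : p.natDegree = n)
    (R : Polynomial ℝ) (hRdef : R = resultant n (n - 1) p (Polynomial.derivative p))
    (J : Set ℝ) (hJ : J = Set.univ ∨ J = Set.Ici (0 : ℝ))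
    (α : ℝ) (hαpos : 0 < α)
    (hαmax : ∀ γ : ℝ, 0 < γ → p.leadingCoeff.eval γ = 0 → γ ≤ α)
    (αk : ℝ)
    (hbound : ∀ c ∈ J, ∀ x : ℝ, evalCX c x p = 0 → x < αk)
    (hγ : ∀ γ ∈ Set.Icc α αk, R.eval γ = 0 → ∀ c ∈ J, evalCX c γ p ≠ 0)
    (h0 : J = Set.Ici (0 : ℝ) → ∀ x : ℝ, α < x → evalCX 0 x p ≠ 0) :
    ∀ c ∈ J, ∀ x : ℝ, evalCX c x p = 0 → x ≤ α := by
  intro c₀ hc₀J x₀ hx₀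
  by_contra! hαx₀
  set S := {x ∈ Icc x₀ αk | ∃ c ∈ J, evalCX c x p = 0}
  have hS : IsCompact S := isCompact_setOf_exists_evalCX_eq_zero isCompact_Icc
    (by rcases hJ with rfl | rfl <;> simp [isClosed_Ici])
    fun x hx h => (hαmax x (hαpos.trans (hαx₀.trans_le hx.1)) h).not_gt (hαx₀.trans_le hx.1)
  obtain ⟨⟨hx₀β, hβαk⟩, c, hcJ, hc⟩ : sSup S ∈ S :=
    hS.sSup_mem ⟨x₀, ⟨le_rfl, (hbound c₀ hc₀J x₀ hx₀).le⟩, c₀, hc₀J, hx₀⟩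
  set β := sSup S
  have hαβ : α < β := hαx₀.trans_le hx₀β
  have hc' : evalCX c β (derivative p) ≠ 0 := fun h => hγ β ⟨hαβ.le, hβαk⟩
    (hRdef ▸ map_resultant_derivative_eq_zero (evalRingHom β) hn hdeg.le hc h) c hcJ hc
  have hJc : J ∈ 𝓝 c := by
    rcases hJ with rfl | rfl
    · exact univ_mem
    · exact Ici_mem_nhds (lt_of_le_of_ne hcJ fun h => h0 rfl β hαβ (h ▸ hc))
  obtain ⟨x, ⟨c', hc'J, hc'x⟩, hβx, hxαk⟩ :=
    ((eventually_exists_evalCX_eq_zero_of_derivative_ne_zero hc hc' hJc).filter_mono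
      nhdsWithin_le_nhds |>.and (Ioo_mem_nhdsGT (hbound c hcJ β hc))).exists
  exact (le_csSup hS.bddAbove ⟨⟨hx₀β.trans hβx.le, hxαk.le⟩, c', hc'J, hc'x⟩).not_gt hβx

/-- second part of the main theorem: with `α` the largest positive real
root of the leading coefficient `pₙ`, `α_k > α` a real root of the resultant `Rₙ` such
that the bound `x₁ < α_k` already holds on the curve over `J`, if no root `γ` of `Rₙ`
in `[α, α_k]` has a fiber meeting `J`, and (when `J = [0, ∞)`) `p(0, ·)` has no real
root greater than `α`, then every point `(c, x₁)` of the curve with `c ∈ J` satisfies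
`x₁ ≤ α`. -/
theorem statement5 (p : Polynomial (Polynomial ℝ)) (n : ℕ) (hn : 1 ≤ n)
    (hdeg : p.natDegree = n)
    (R : Polynomial ℝ) (hRdef : R = resultant n (n - 1) p (Polynomial.derivative p))
    (hR0 : R ≠ 0)
    (J : Set ℝ) (hJ : J = Set.univ ∨ J = Set.Ici (0 : ℝ))
    (α : ℝ) (hαpos : 0 < α) (hαroot : p.leadingCoeff.eval α = 0)
    (hαmax : ∀ γ : ℝ, 0 < γ → p.leadingCoeff.eval γ = 0 → γ ≤ α)
    (αk : ℝ) (hαk : R.eval αk = 0) (hααk : α < αk)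
    (hbound : ∀ c ∈ J, ∀ x : ℝ, evalCX c x p = 0 → x < αk)
    (hγ : ∀ γ ∈ Set.Icc α αk, R.eval γ = 0 → ∀ c ∈ J, evalCX c γ p ≠ 0)
    (h0 : J = Set.Ici (0 : ℝ) → ∀ x : ℝ, α < x → evalCX 0 x p ≠ 0) :
    ∀ c ∈ J, ∀ x : ℝ, evalCX c x p = 0 → x ≤ α :=
  statement5_general p n hn hdeg R hRdef J hJ α hαpos hαmax αk hbound hγ h0
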